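/- If a sequent Γ ⇒ Δ is provable in the finitary sequent calculus Grz_Seq + cut, then it is provable in the non-well-founded calculus Grz∞ + cut. -/

import Mathlib

/-- Modal formulas of the Grzegorczyk logic: ⊥, atoms, →, □. -/
inductive Formula : Type
  | bot : Formula
  | atom : ℕ → Formula
  | imp : Formula → Formula → Formula
  | box : Formula → Formula
deriving DecidableEq

/-- A sequent Γ ⇒ Δ is a pair of finite multisets of formulas. -/
abbrev Sequent : Type := Multiset Formula × Multiset Formula

/-- Names of the inference rules of Grz∞ + cut (including the two kinds of initial sequents). -/
inductive Rule : Type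
  | ax | axBot | impL | impR | refl | box | cut
deriving DecidableEq

/-- □Π for a multiset Π. -/
def boxed (P : Multiset Formula) : Multiset Formula := P.map Formula.box

/-- `Inst r s p₁ p₂` : the rule `r` has a (correct) instance with conclusion `s`,
first premise `p₁` and second premise `p₂` (`none` = no such premise). -/
inductive Inst : Rule → Sequent → Option Sequent → Option Sequent → Prop
  | ax (Γ Δ : Multiset Formula) (p : ℕ) :
      Inst .ax (Formula.atom p ::ₘ Γ, Formula.atom p ::ₘ Δ) none none
  | axBot (Γ Δ : Multiset Formula) :
      Inst .axBot (Formula.bot ::ₘ Γ, Δ) none none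
  | impL (Γ Δ : Multiset Formula) (A B : Formula) :
      Inst .impL (Formula.imp A B ::ₘ Γ, Δ) (some (B ::ₘ Γ, Δ)) (some (Γ, A ::ₘ Δ))
  | impR (Γ Δ : Multiset Formula) (A B : Formula) :
      Inst .impR (Γ, Formula.imp A B ::ₘ Δ) (some (A ::ₘ Γ, B ::ₘ Δ)) none
  | refl (Γ Δ : Multiset Formula) (A : Formula) :
      Inst .refl (Formula.box A ::ₘ Γ, Δ) (some (A ::ₘ Formula.box A ::ₘ Γ, Δ)) none
  | box (Γ Δ : Multiset Formula) (A : Formula) (P : Multiset Formula) :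
      Inst .box (Γ + boxed P, Formula.box A ::ₘ Δ) (some (Γ + boxed P, A ::ₘ Δ))
        (some (boxed P, {A}))
  | cut (Γ Δ : Multiset Formula) (A : Formula) :
      Inst .cut (Γ, Δ) (some (Γ, A ::ₘ Δ)) (some (A ::ₘ Γ, Δ))

/-- A labelling of tree addresses (lists of booleans; `true` = second/right child)
by a rule name together with a sequent; `none` means the address is outside the tree. -/
abbrev Lab : Type := List Bool → Option (Rule × Sequent)

/-- The labelling of the subtree at child `i`. -/
def shift (i : Bool) (l : Lab) : Lab := fun a => l (i :: a)

/-- An ∞-proof in Grz∞ + cut: a possibly infinite tree of sequents built according to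
the rules, in which every infinite branch passes through the right premise of the
rule (□) infinitely many times. -/
structure InfProof : Type where
  lab : Lab
  root_some : (lab []).isSome
  nojunk : ∀ (a : List Bool) (i : Bool), lab a = none → lab (a ++ [i]) = none
  step : ∀ (a : List Bool) (r : Rule) (s : Sequent), lab a = some (r, s) →
      Inst r s ((lab (a ++ [false])).map Prod.snd) ((lab (a ++ [true])).map Prod.snd)
  branch : ∀ f : ℕ → Bool, (∀ n : ℕ, (lab ((List.range n).map f)).isSome) →
      ∀ N : ℕ, ∃ n : ℕ, N ≤ n ∧ f n = true ∧
        (lab ((List.range n).map f)).map Prod.fst = some Rule.box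

/-- The sequent at the root of an ∞-proof. -/
def rootSeq (π : InfProof) : Sequent := ((π.lab []).map Prod.snd).getD (0, 0)

/-- `Proves π S` : the ∞-proof `π` is an ∞-proof of the sequent `S`. -/
def Proves (π : InfProof) (S : Sequent) : Prop := ∃ r : Rule, π.lab [] = some (r, S)

/-- An ∞-proof contains no application of the cut rule (i.e. it is a proof of Grz∞). -/
def NoCut (π : InfProof) : Prop := ∀ (a : List Bool) (r : Rule) (s : Sequent),
  π.lab a = some (r, s) → r ≠ Rule.cut

/-- Membership of an address in the main fragment: no proper passage through a
right premise of (□) strictly below it. -/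
def InMain (l : Lab) (a : List Bool) : Prop :=
  (l a).isSome ∧ ∀ (b c : List Bool), a = b ++ true :: c →
    (l b).map Prod.fst = some Rule.box → c = []

/-- The local height |π| : the length of the longest branch in the main fragment. -/
noncomputable def height (l : Lab) : ℕ := sSup {n : ℕ | ∃ a : List Bool, InMain l a ∧ a.length = n}

/-- The relations ∼ₙ on ∞-proofs (presented on labellings), defined inductively:
π ∼₀ τ always; a single-node proof is ∼ₙ-related to itself; proofs ending in the same
instance of (→L), (cut), (→R), (refl) are ∼ₙ-related when their immediate subproofs are;
proofs ending in the same instance of (□) are ∼ₙ₊₁-related when the left-premise subproofs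
are ∼ₙ₊₁-related and the right-premise subproofs are ∼ₙ-related. -/
inductive Sim : ℕ → Lab → Lab → Prop
  | zero (l m : Lab) : Sim 0 l m
  | leaf (n : ℕ) (l : Lab) : height l = 0 → Sim n l l
  | bin (n : ℕ) (l m : Lab) (r : Rule) (s : Sequent) :
      (r = Rule.impL ∨ r = Rule.cut) →
      l [] = some (r, s) → m [] = some (r, s) →
      (l [false]).map Prod.snd = (m [false]).map Prod.snd →
      (l [true]).map Prod.snd = (m [true]).map Prod.snd →
      Sim n (shift false l) (shift false m) → Sim n (shift true l) (shift true m) →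
      Sim n l m
  | un (n : ℕ) (l m : Lab) (r : Rule) (s : Sequent) :
      (r = Rule.impR ∨ r = Rule.refl) →
      l [] = some (r, s) → m [] = some (r, s) →
      (l [false]).map Prod.snd = (m [false]).map Prod.snd →
      Sim n (shift false l) (shift false m) →
      Sim n l m
  | box (n : ℕ) (l m : Lab) (s : Sequent) :
      l [] = some (Rule.box, s) → m [] = some (Rule.box, s) →
      (l [false]).map Prod.snd = (m [false]).map Prod.snd →
      (l [true]).map Prod.snd = (m [true]).map Prod.snd →
      Sim (n + 1) (shift false l) (shift false m) → Sim n (shift true l) (shift true m) →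
      Sim (n + 1) l m

/-- The sets 𝒫ₙ of ∞-proofs (presented on labellings), defined inductively:
𝒫₀ is everything; single-node proofs are in every 𝒫ₙ; (→L), (→R), (refl) preserve
membership in 𝒫ₙ; a proof ending in (□) with left-premise subproof in 𝒫ₙ₊₁ and
right-premise subproof in 𝒫ₙ is in 𝒫ₙ₊₁. -/
inductive MemP : ℕ → Lab → Prop
  | zero (l : Lab) : MemP 0 l
  | leaf (n : ℕ) (l : Lab) : height l = 0 → MemP n l
  | bin (n : ℕ) (l : Lab) (s : Sequent) :
      l [] = some (Rule.impL, s) →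
      MemP n (shift false l) → MemP n (shift true l) → MemP n l
  | un (n : ℕ) (l : Lab) (r : Rule) (s : Sequent) :
      (r = Rule.impR ∨ r = Rule.refl) →
      l [] = some (r, s) → MemP n (shift false l) → MemP n l
  | box (n : ℕ) (l : Lab) (s : Sequent) :
      l [] = some (Rule.box, s) →
      MemP (n + 1) (shift false l) → MemP n (shift true l) → MemP (n + 1) l

/- The metric d(π,τ) = 2^(−sup{n : π ∼ₙ τ}), with 2^(−∞) = 0. -/
open Classical in
noncomputable def pdist (π τ : InfProof) : ℝ :=
  if ∀ n : ℕ, Sim n π.lab τ.lab then 0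
  else (2 : ℝ) ^ (-((sSup {n : ℕ | Sim n π.lab τ.lab} : ℕ) : ℤ))

/-- A mapping on ∞-proofs is nonexpansive if it preserves all relations ∼ₙ. -/
def Nonexpansive (f : InfProof → InfProof) : Prop :=
  ∀ (n : ℕ) (π τ : InfProof), Sim n π.lab τ.lab → Sim n (f π).lab (f τ).lab

/-- A mapping is adequate if it is nonexpansive, maps 𝒫₁ into 𝒫₁,
and does not increase local height. -/
def Adequate (f : InfProof → InfProof) : Prop :=
  Nonexpansive f ∧ (∀ π : InfProof, MemP 1 π.lab → MemP 1 (f π).lab) ∧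
    ∀ π : InfProof, height (f π).lab ≤ height π.lab

/-- The set 𝒫₁ of ∞-proofs whose main fragment is cut-free, as a subtype. -/
abbrev P1 : Type := {π : InfProof // MemP 1 π.lab}

/-- An A-reducing mapping: a nonexpansive map ℛ : 𝒫₁ × 𝒫₁ → 𝒫₁ such that
ℛ(π′,π″) proves Γ ⇒ Δ whenever π′ proves Γ ⇒ Δ, A and π″ proves A, Γ ⇒ Δ. -/
def Reducing (A : Formula) (R : P1 → P1 → P1) : Prop :=
  (∀ (n : ℕ) (p₁ p₂ q₁ q₂ : P1), Sim n p₁.1.lab q₁.1.lab → Sim n p₂.1.lab q₂.1.lab →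
      Sim n (R p₁ p₂).1.lab (R q₁ q₂).1.lab) ∧
  ∀ (p₁ p₂ : P1) (Γ Δ : Multiset Formula),
    Proves p₁.1 (Γ, A ::ₘ Δ) → Proves p₂.1 (A ::ₘ Γ, Δ) → Proves (R p₁ p₂).1 (Γ, Δ)

/-- A mapping is root-preserving if it maps ∞-proofs to ∞-proofs of the same sequent. -/
def RootPres (f : InfProof → InfProof) : Prop :=
  ∀ (π : InfProof) (S : Sequent), Proves π S → Proves (f π) S

/-- The uniform distance on mappings of ∞-proofs. -/
noncomputable def udist (U V : InfProof → InfProof) : ℝ :=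
  ⨆ π : InfProof, pdist (U π) (V π)

/- The immediate subproof of `π` at child `i` (junk value `π` if there is none). -/
open Classical in
noncomputable def subtree (π : InfProof) (i : Bool) : InfProof :=
  if h : ∃ τ : InfProof, τ.lab = shift i π.lab then h.choose else π

/-- `IsFOp E F` : `F` is the operator ℱ (relative to the one-step cut-elimination map
`E` = ℰ*) defined by: on proofs with cut-free main fragment it commutes with the last
rule, applying `U` at right premises of (□) and fixing single-node proofs; on other
proofs it first applies `E`. -/
def IsFOp (E : InfProof → InfProof) (F : (InfProof → InfProof) → InfProof → InfProof) : Prop :=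
  ∀ (U : InfProof → InfProof) (π : InfProof),
    (MemP 1 π.lab → height π.lab = 0 → F U π = π) ∧
    (∀ (r : Rule) (s : Sequent), MemP 1 π.lab → π.lab [] = some (r, s) →
        r ≠ Rule.box → r ≠ Rule.cut → height π.lab ≠ 0 →
        (F U π).lab [] = some (r, s) ∧
        shift false (F U π).lab = (F U (subtree π false)).lab ∧
        (r = Rule.impL → shift true (F U π).lab = (F U (subtree π true)).lab)) ∧
    (∀ s : Sequent, MemP 1 π.lab → π.lab [] = some (Rule.box, s) →
        (F U π).lab [] = some (Rule.box, s) ∧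
        shift false (F U π).lab = (F U (subtree π false)).lab ∧
        shift true (F U π).lab = (U (subtree π true)).lab) ∧
    (¬ MemP 1 π.lab → F U π = F U (E π))

/-- Membership in 𝒩ₙ : a root-preserving nonexpansive map whose image lies in 𝒫ₙ. -/
def InN (n : ℕ) (U : InfProof → InfProof) : Prop :=
  Nonexpansive U ∧ RootPres U ∧ ∀ π : InfProof, MemP n (U π).lab

/-- The finitary sequent calculus Grz_Seq (with cut allowed iff the flag is `true`). -/
inductive GrzSeq : Bool → Sequent → Prop
  | ax (c : Bool) (Γ Δ : Multiset Formula) (A : Formula) :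
      GrzSeq c (A ::ₘ Γ, A ::ₘ Δ)
  | bot (c : Bool) (Γ Δ : Multiset Formula) :
      GrzSeq c (Formula.bot ::ₘ Γ, Δ)
  | impL (c : Bool) (Γ Δ : Multiset Formula) (A B : Formula) :
      GrzSeq c (B ::ₘ Γ, Δ) → GrzSeq c (Γ, A ::ₘ Δ) →
      GrzSeq c (Formula.imp A B ::ₘ Γ, Δ)
  | impR (c : Bool) (Γ Δ : Multiset Formula) (A B : Formula) :
      GrzSeq c (A ::ₘ Γ, B ::ₘ Δ) → GrzSeq c (Γ, Formula.imp A B ::ₘ Δ)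
  | refl (c : Bool) (Γ Δ : Multiset Formula) (B : Formula) :
      GrzSeq c (B ::ₘ Formula.box B ::ₘ Γ, Δ) → GrzSeq c (Formula.box B ::ₘ Γ, Δ)
  | grz (c : Bool) (Γ Δ : Multiset Formula) (A : Formula) (P : Multiset Formula) :
      GrzSeq c (Formula.box (Formula.imp A (Formula.box A)) ::ₘ boxed P, {A}) →
      GrzSeq c (Γ + boxed P, Formula.box A ::ₘ Δ)
  | cut (Γ Δ : Multiset Formula) (A : Formula) :
      GrzSeq true (Γ, A ::ₘ Δ) → GrzSeq true (A ::ₘ Γ, Δ) → GrzSeq true (Γ, Δ)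

/-!
Every rule of Grz_Seq + cut other than □_Grz is a rule of Grz∞ + cut, and weakening is
admissible in Grz∞ + cut: weaken every sequent of the main fragment. The rule □_Grz is
simulated by a cyclic proof. Given a proof of □(A → □A), □Π ⇒ A, cut it against
□Π ⇒ □(A → □A), A, derived by (□) with right premise □Π ⇒ A → □A; by (→R) and (□) the latter
needs □Π ⇒ A again, as a right premise of (□). Unfolding this cycle gives an ∞-proof of
□Π ⇒ A: its labelling is a guarded fixed point, and every infinite branch either ends in one of
the given proofs or runs through the cycle, and through a right premise of (□), infinitely often.
-/

def Provable (S : Sequent) : Prop := ∃ π : InfProof, Proves π S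

theorem Proves.map_snd_lab_nil {π : InfProof} {S : Sequent} (h : Proves π S) :
    (π.lab []).map Prod.snd = some S := by
  obtain ⟨r, hr⟩ := h
  simp [hr]

namespace Lab

def empty : Lab := fun _ => none

def graft (x : Rule × Sequent) (l₁ l₂ : Lab) : Lab
  | [] => some x
  | false :: a => l₁ a
  | true :: a => l₂ a

@[simp] theorem empty_apply (a : List Bool) : empty a = none := rfl

@[simp] theorem graft_nil (x : Rule × Sequent) (l₁ l₂ : Lab) : graft x l₁ l₂ [] = some x := rfl

def branchPrefix (f : ℕ → Bool) (n : ℕ) : List Bool := (List.range n).map f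

theorem branchPrefix_succ (f : ℕ → Bool) (n : ℕ) :
    branchPrefix f (n + 1) = f 0 :: branchPrefix (fun k => f (k + 1)) n := by
  simp [branchPrefix, List.range_succ_eq_map, Function.comp_def]

theorem graft_branchPrefix_succ (x : Rule × Sequent) (l₁ l₂ : Lab) (f : ℕ → Bool) (n : ℕ) :
    graft x l₁ l₂ (branchPrefix f (n + 1)) =
      cond (f 0) l₂ l₁ (branchPrefix (fun k => f (k + 1)) n) := by
  rw [branchPrefix_succ]
  cases f 0 <;> rfl

/-- The conditions of `InfProof` other than `root_some`, with the local ones checked at depth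
`< N` only and progress required only once, at depth `≥ N`. For all `N` together they are exactly
those conditions, and unlike them they can be proved for a cyclic labelling by induction on `N`;
the empty labelling, standing for a missing premise, satisfies them. -/
structure IsProofUpTo (N : ℕ) (l : Lab) : Prop where
  nojunk : ∀ (a : List Bool) (i : Bool), a.length < N → l a = none → l (a ++ [i]) = none
  step : ∀ (a : List Bool) (r : Rule) (s : Sequent), a.length < N → l a = some (r, s) →
    Inst r s ((l (a ++ [false])).map Prod.snd) ((l (a ++ [true])).map Prod.snd)
  branch : ∀ f : ℕ → Bool, (∀ n, (l (branchPrefix f n)).isSome) →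
    ∃ n, N ≤ n ∧ f n = true ∧ (l (branchPrefix f n)).map Prod.fst = some Rule.box

theorem IsProofUpTo.mono {M N : ℕ} {l : Lab} (h : IsProofUpTo N l) (hMN : M ≤ N) :
    IsProofUpTo M l where
  nojunk a i ha := h.nojunk a i (by omega)
  step a r s ha := h.step a r s (by omega)
  branch f hf := by
    obtain ⟨n, hn, hbox⟩ := h.branch f hf
    exact ⟨n, by omega, hbox⟩

theorem isProofUpTo_empty (N : ℕ) : IsProofUpTo N empty where
  nojunk _ _ _ _ := rfl
  step _ _ _ _ h := by simp at h
  branch _ hf := by simpa using hf 0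

theorem IsProofUpTo.graft {N : ℕ} {x : Rule × Sequent} {l₁ l₂ : Lab}
    (hx : Inst x.1 x.2 ((l₁ []).map Prod.snd) ((l₂ []).map Prod.snd))
    (h₁ : IsProofUpTo N l₁) (h₂ : IsProofUpTo N l₂) : IsProofUpTo (N + 1) (graft x l₁ l₂) where
  nojunk := by
    rintro (_ | ⟨_ | _, a⟩) i ha h
    · simp at h
    · exact h₁.nojunk a i (by simpa using ha) h
    · exact h₂.nojunk a i (by simpa using ha) h
  step := by
    rintro (_ | ⟨_ | _, a⟩) r s ha h
    · obtain rfl : x = (r, s) := Option.some.inj h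
      exact hx
    · exact h₁.step a r s (by simpa using ha) h
    · exact h₂.step a r s (by simpa using ha) h
  branch f hf := by
    have h' : IsProofUpTo N (cond (f 0) l₂ l₁) := by cases f 0 <;> assumption
    obtain ⟨n, hn, hfn, hbox⟩ := h'.branch (fun k => f (k + 1)) fun k => by
      simpa only [graft_branchPrefix_succ] using hf (k + 1)
    exact ⟨n + 1, by omega, hfn, by rwa [graft_branchPrefix_succ]⟩

/-- A branch leaving a (□) node to the right makes progress at once, so only the left subproof
matters at depth `0`. -/
theorem IsProofUpTo.graft_box {l₁ : Lab} (h₁ : IsProofUpTo 0 l₁) (s : Sequent) (l₂ : Lab) :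
    IsProofUpTo 0 (Lab.graft (.box, s) l₁ l₂) where
  nojunk _ _ ha := absurd ha (Nat.not_lt_zero _)
  step _ _ _ ha := absurd ha (Nat.not_lt_zero _)
  branch f hf := by
    cases h0 : f 0
    · obtain ⟨n, -, hfn, hbox⟩ := h₁.branch (fun k => f (k + 1)) fun k => by
        simpa only [graft_branchPrefix_succ, h0, cond_false] using hf (k + 1)
      exact ⟨n + 1, Nat.zero_le _, hfn, by rwa [graft_branchPrefix_succ, h0, cond_false]⟩
    · exact ⟨0, le_rfl, h0, rfl⟩

def AgreeBelow (n : ℕ) (l l' : Lab) : Prop := ∀ a : List Bool, a.length < n → l a = l' a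

theorem AgreeBelow.mono {m n : ℕ} {l l' : Lab} (h : AgreeBelow n l l') (hmn : m ≤ n) :
    AgreeBelow m l l' :=
  fun a ha => h a (by omega)

theorem AgreeBelow.graft {n : ℕ} {l₁ l₁' l₂ l₂' : Lab} (x : Rule × Sequent)
    (h₁ : AgreeBelow n l₁ l₁') (h₂ : AgreeBelow n l₂ l₂') :
    AgreeBelow (n + 1) (graft x l₁ l₂) (graft x l₁' l₂') := by
  rintro (_ | ⟨_ | _, a⟩) ha
  · rfl
  · exact h₁ a (by simpa using ha)
  · exact h₂ a (by simpa using ha)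

def Guarded (Φ : Lab → Lab) : Prop :=
  ∀ (n : ℕ) (l l' : Lab), AgreeBelow n l l' → AgreeBelow (n + 1) (Φ l) (Φ l')

/-- The label at `a` is already stable after `a.length + 1` iterations of a guarded map. -/
def guardedFix (Φ : Lab → Lab) : Lab := fun a => Φ^[a.length + 1] empty a

section GuardedFix

variable {Φ : Lab → Lab}

theorem Guarded.agreeBelow_iterate (hΦ : Guarded Φ) (n : ℕ) (l l' : Lab) :
    AgreeBelow n (Φ^[n] l) (Φ^[n] l') := by
  induction n with
  | zero => exact fun a ha => absurd ha (Nat.not_lt_zero _)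
  | succ n ih =>
    rw [Function.iterate_succ_apply', Function.iterate_succ_apply']
    exact hΦ n _ _ ih

theorem Guarded.agreeBelow_guardedFix (hΦ : Guarded Φ) (n : ℕ) :
    AgreeBelow n (guardedFix Φ) (Φ^[n] empty) := by
  intro a ha
  obtain ⟨k, rfl⟩ : ∃ k, n = a.length + 1 + k := ⟨n - (a.length + 1), by omega⟩
  rw [Function.iterate_add_apply]
  exact hΦ.agreeBelow_iterate (a.length + 1) empty _ a (Nat.lt_succ_self _)

theorem Guarded.guardedFix_eq (hΦ : Guarded Φ) : guardedFix Φ = Φ (guardedFix Φ) := by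
  funext a
  have h := hΦ a.length _ _ (hΦ.agreeBelow_guardedFix a.length) a (Nat.lt_succ_self _)
  rw [← Function.iterate_succ_apply' Φ] at h
  exact h.symm

end GuardedFix

end Lab

open Lab

theorem InfProof.isProofUpTo (π : InfProof) (N : ℕ) : IsProofUpTo N π.lab where
  nojunk a i _ := π.nojunk a i
  step a r s _ := π.step a r s
  branch f hf := π.branch f hf N

def InfProof.ofIsProofUpTo (l : Lab) (hroot : (l []).isSome) (h : ∀ N, IsProofUpTo N l) :
    InfProof where
  lab := l
  root_some := hroot
  nojunk a i := (h (a.length + 1)).nojunk a i (Nat.lt_succ_self _)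
  step a r s := (h (a.length + 1)).step a r s (Nat.lt_succ_self _)
  branch f hf N := (h N).branch f hf

theorem provable_of_graft {r : Rule} {s : Sequent} {l₁ l₂ : Lab}
    (h : Inst r s ((l₁ []).map Prod.snd) ((l₂ []).map Prod.snd))
    (h₁ : ∀ N, IsProofUpTo N l₁) (h₂ : ∀ N, IsProofUpTo N l₂) : Provable s :=
  ⟨.ofIsProofUpTo (graft (r, s) l₁ l₂) rfl fun N => ((h₁ N).graft h (h₂ N)).mono N.le_succ,
    r, rfl⟩

namespace Provable

variable {r : Rule} {s s₁ s₂ : Sequent}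

theorem of_inst₀ (h : Inst r s none none) : Provable s :=
  provable_of_graft h isProofUpTo_empty isProofUpTo_empty

theorem of_inst₁ (h : Inst r s (some s₁) none) : Provable s₁ → Provable s
  | ⟨π₁, h₁⟩ => provable_of_graft (by rwa [h₁.map_snd_lab_nil]) π₁.isProofUpTo isProofUpTo_empty

theorem of_inst₂ (h : Inst r s (some s₁) (some s₂)) : Provable s₁ → Provable s₂ → Provable s
  | ⟨π₁, h₁⟩, ⟨π₂, h₂⟩ =>
    provable_of_graft (by rwa [h₁.map_snd_lab_nil, h₂.map_snd_lab_nil]) π₁.isProofUpTo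
      π₂.isProofUpTo

end Provable

theorem provable_id (A : Formula) : ∀ Γ Δ : Multiset Formula, Provable (A ::ₘ Γ, A ::ₘ Δ) := by
  induction A with
  | bot => exact fun Γ Δ => .of_inst₀ (Inst.axBot Γ _)
  | atom p => exact fun Γ Δ => .of_inst₀ (Inst.ax Γ Δ p)
  | imp B C ihB ihC =>
    intro Γ Δ
    have hC : Provable (C ::ₘ Γ, .imp B C ::ₘ Δ) := .of_inst₁ (Inst.impR _ Δ B C) <| by
      simpa only [Multiset.cons_swap B C] using ihC (B ::ₘ Γ) Δ
    have hB : Provable (Γ, B ::ₘ .imp B C ::ₘ Δ) := by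
      rw [Multiset.cons_swap]
      refine .of_inst₁ (Inst.impR Γ _ B C) ?_
      simpa only [Multiset.cons_swap C B] using ihB Γ (C ::ₘ Δ)
    exact .of_inst₂ (Inst.impL Γ _ B C) hC hB
  | box B ih =>
    intro Γ Δ
    have hbox := Inst.box (B ::ₘ Γ) Δ B {B}
    rw [boxed, Multiset.map_singleton, Multiset.cons_add, add_comm, Multiset.singleton_add] at hbox
    refine .of_inst₁ (Inst.refl Γ _ B) (.of_inst₂ hbox (ih _ Δ) ?_)
    simpa using Provable.of_inst₁ (Inst.refl 0 {B} B) (ih {.box B} 0)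

def wkSeq (W V : Multiset Formula) (s : Sequent) : Sequent := (s.1 + W, s.2 + V)

/-- The right premise □Π ⇒ A of (□) has no side formulas, so it stays as it is. -/
theorem Inst.weaken {r : Rule} {s : Sequent} {p₁ p₂ : Option Sequent} (W V : Multiset Formula)
    (h : Inst r s p₁ p₂) :
    Inst r (wkSeq W V s) (p₁.map (wkSeq W V)) (if r = .box then p₂ else p₂.map (wkSeq W V)) := by
  cases h with
  | ax Γ Δ p => simpa [wkSeq, Multiset.cons_add] using Inst.ax (Γ + W) (Δ + V) p
  | axBot Γ Δ => simpa [wkSeq, Multiset.cons_add] using Inst.axBot (Γ + W) (Δ + V)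
  | impL Γ Δ A B => simpa [wkSeq, Multiset.cons_add] using Inst.impL (Γ + W) (Δ + V) A B
  | impR Γ Δ A B => simpa [wkSeq, Multiset.cons_add] using Inst.impR (Γ + W) (Δ + V) A B
  | refl Γ Δ A => simpa [wkSeq, Multiset.cons_add] using Inst.refl (Γ + W) (Δ + V) A
  | cut Γ Δ A => simpa [wkSeq, Multiset.cons_add] using Inst.cut (Γ + W) (Δ + V) A
  | box Γ Δ A P =>
    have h := Inst.box (Γ + W) (Δ + V) A P
    rw [add_right_comm Γ W (boxed P)] at h
    simpa [wkSeq, Multiset.cons_add] using h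

namespace Lab

def LocallyCorrect (l : Lab) : Prop :=
  ∀ (a : List Bool) (r : Rule) (s : Sequent), l a = some (r, s) →
    Inst r s ((l (a ++ [false])).map Prod.snd) ((l (a ++ [true])).map Prod.snd)

/-- Weakening of the main fragment: the subtree above a right premise of (□) is kept. -/
def weaken (W V : Multiset Formula) : Lab → Lab
  | l, [] => (l []).map fun x => (x.1, wkSeq W V x.2)
  | l, i :: a =>
    if i = true ∧ (l []).map Prod.fst = some .box then l (true :: a)
    else weaken W V (shift i l) a

variable {W V : Multiset Formula}

theorem map_fst_weaken (l : Lab) (a : List Bool) :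
    (weaken W V l a).map Prod.fst = (l a).map Prod.fst := by
  induction a generalizing l with
  | nil => simp [weaken, Option.map_map, Function.comp_def]
  | cons i a ih =>
    rw [weaken]
    split_ifs with h
    · rw [h.1]
    · exact ih (shift i l)

theorem isSome_weaken (l : Lab) (a : List Bool) : (weaken W V l a).isSome = (l a).isSome := by
  rw [← Option.isSome_map (f := Prod.fst), map_fst_weaken, Option.isSome_map]

theorem LocallyCorrect.weaken {l : Lab} (hl : LocallyCorrect l) :
    LocallyCorrect (weaken W V l) := by
  intro a
  induction a generalizing l with
  | nil =>
    intro r s h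
    obtain ⟨⟨r, s'⟩, hroot, hrs⟩ := Option.map_eq_some_iff.mp h
    obtain ⟨rfl, rfl⟩ := Prod.mk.inj hrs
    convert (hl [] r s' hroot).weaken W V using 1
    · simp [Lab.weaken, shift, Option.map_map, Function.comp_def, wkSeq]
    · split_ifs with hbox <;> simp [Lab.weaken, shift, hroot, hbox, Option.map_map,
        Function.comp_def, wkSeq]
  | cons i a ih =>
    intro r s h
    simp only [List.cons_append, Lab.weaken] at h ⊢
    split_ifs at h ⊢
    · exact hl _ r s h
    · exact ih (fun b => hl (i :: b)) r s h

end Lab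

def InfProof.weaken (W V : Multiset Formula) (π : InfProof) : InfProof where
  lab := Lab.weaken W V π.lab
  root_some := by rw [isSome_weaken]; exact π.root_some
  nojunk a i h := by
    rw [← Option.not_isSome_iff_eq_none, isSome_weaken, Option.not_isSome_iff_eq_none] at h ⊢
    exact π.nojunk a i h
  step := LocallyCorrect.weaken π.step
  branch f hf := by
    simp only [map_fst_weaken, isSome_weaken] at hf ⊢
    exact π.branch f hf

theorem Provable.weaken {Γ Δ : Multiset Formula} (h : Provable (Γ, Δ)) (W V : Multiset Formula) :
    Provable (Γ + W, Δ + V) := by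
  obtain ⟨π, r, hπ⟩ := h
  exact ⟨π.weaken W V, r, by simp [InfProof.weaken, Lab.weaken, hπ, wkSeq]⟩

namespace Lab

/-- The cycle simulating □_Grz: with `δ` a proof of □(A → □A), □Π ⇒ A, `ι₁` of A, □Π ⇒ □A, A
and `ι₂` of A, □Π ⇒ A, this is a proof of □Π ⇒ A as soon as `l` is one. -/
def grzLoopBody (P : Multiset Formula) (A : Formula) (δ ι₁ ι₂ l : Lab) : Lab :=
  graft (.cut, (boxed P, {A}))
    (graft (.box, (boxed P, .box (.imp A (.box A)) ::ₘ {A}))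
      (graft (.impR, (boxed P, .imp A (.box A) ::ₘ {A})) ι₁ empty)
      (graft (.impR, (boxed P, {.imp A (.box A)}))
        (graft (.box, (A ::ₘ boxed P, {.box A})) ι₂ l) empty))
    δ

theorem guarded_grzLoopBody (P : Multiset Formula) (A : Formula) (δ ι₁ ι₂ : Lab) :
    Guarded (grzLoopBody P A δ ι₁ ι₂) := by
  intro n l l' h
  have refl : ∀ {m : ℕ} (k : Lab), AgreeBelow m k k := fun _ _ _ => rfl
  exact (AgreeBelow.graft _ (.graft _ (refl _) (.graft _ (.graft _ (refl _) h) (refl _)))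
    (refl _)).mono (by omega)

variable {P : Multiset Formula} {A : Formula} {δ ι₁ ι₂ : InfProof}

theorem isProofUpTo_zero_grzLoopBody (hδ : Proves δ (.box (.imp A (.box A)) ::ₘ boxed P, {A}))
    (hι₁ : Proves ι₁ (A ::ₘ boxed P, .box A ::ₘ {A})) (l : Lab) :
    IsProofUpTo 0 (grzLoopBody P A δ.lab ι₁.lab ι₂.lab l) := by
  have hX := (ι₁.isProofUpTo 0).graft (x := (.impR, (boxed P, .imp A (.box A) ::ₘ {A})))
    (by rw [hι₁.map_snd_lab_nil]; exact Inst.impR _ _ _ _) (isProofUpTo_empty 0)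
  have hG := (hX.mono (Nat.zero_le 1)).graft_box (boxed P, .box (.imp A (.box A)) ::ₘ {A})
    (graft (.impR, (boxed P, {.imp A (.box A)}))
      (graft (.box, (A ::ₘ boxed P, {.box A})) ι₂.lab l) empty)
  exact (hG.graft (by rw [hδ.map_snd_lab_nil]; exact Inst.cut _ _ _) (δ.isProofUpTo 0)).mono
    (Nat.zero_le 1)

theorem IsProofUpTo.grzLoopBody {N : ℕ} {l : Lab}
    (hδ : Proves δ (.box (.imp A (.box A)) ::ₘ boxed P, {A}))
    (hι₁ : Proves ι₁ (A ::ₘ boxed P, .box A ::ₘ {A})) (hι₂ : Proves ι₂ (A ::ₘ boxed P, {A}))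
    (hl : IsProofUpTo N l) (hroot : (l []).map Prod.snd = some (boxed P, {A})) :
    IsProofUpTo (N + 1) (Lab.grzLoopBody P A δ.lab ι₁.lab ι₂.lab l) := by
  have hY' := (ι₂.isProofUpTo N).graft (x := (.box, (A ::ₘ boxed P, {.box A})))
    (by rw [hι₂.map_snd_lab_nil, hroot]; simpa using Inst.box {A} 0 A P) hl
  have hY := hY'.graft (x := (.impR, (boxed P, {.imp A (.box A)})))
    (by simpa using Inst.impR (boxed P) 0 A (.box A)) (isProofUpTo_empty _)
  have hX := (ι₁.isProofUpTo (N + 1)).graft (x := (.impR, (boxed P, .imp A (.box A) ::ₘ {A})))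
    (by rw [hι₁.map_snd_lab_nil]; exact Inst.impR _ _ _ _) (isProofUpTo_empty _)
  have hG := (hX.mono (by omega)).graft (x := (.box, (boxed P, .box (.imp A (.box A)) ::ₘ {A})))
    (by simpa using Inst.box 0 {A} (.imp A (.box A)) P) hY
  exact (hG.graft (by rw [hδ.map_snd_lab_nil]; exact Inst.cut _ _ _)
    (δ.isProofUpTo _)).mono (by omega)

end Lab

theorem Provable.of_grz_premise {P : Multiset Formula} {A : Formula}
    (h : Provable (.box (.imp A (.box A)) ::ₘ boxed P, {A})) : Provable (boxed P, {A}) := by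
  obtain ⟨δ, hδ⟩ := h
  obtain ⟨ι₁, hι₁⟩ : Provable (A ::ₘ boxed P, .box A ::ₘ {A}) := by
    have h := provable_id A (boxed P) {.box A}
    rwa [← Multiset.cons_zero, Multiset.cons_swap, Multiset.cons_zero] at h
  obtain ⟨ι₂, hι₂⟩ : Provable (A ::ₘ boxed P, {A}) := by
    simpa using provable_id A (boxed P) 0
  set Φ := grzLoopBody P A δ.lab ι₁.lab ι₂.lab
  have hfix : guardedFix Φ = Φ (guardedFix Φ) := (guarded_grzLoopBody _ _ _ _ _).guardedFix_eq
  have hroot : guardedFix Φ [] = some (.cut, (boxed P, {A})) := by rw [hfix]; rfl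
  have hproof : ∀ N, IsProofUpTo N (guardedFix Φ) := by
    intro N
    induction N with
    | zero => rw [hfix]; exact isProofUpTo_zero_grzLoopBody hδ hι₁ _
    | succ N ih => rw [hfix]; exact ih.grzLoopBody hδ hι₁ hι₂ (by rw [hroot]; rfl)
  exact ⟨.ofIsProofUpTo _ (by rw [hroot]; rfl) hproof, .cut, hroot⟩

theorem Provable.grz {P : Multiset Formula} {A : Formula}
    (h : Provable (.box (.imp A (.box A)) ::ₘ boxed P, {A})) (Γ Δ : Multiset Formula) :
    Provable (Γ + boxed P, .box A ::ₘ Δ) := by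
  have hloop := Provable.of_grz_premise h
  have hleft := hloop.weaken Γ Δ
  rw [add_comm, Multiset.singleton_add] at hleft
  exact .of_inst₂ (Inst.box Γ Δ A P) hleft hloop

theorem provable_of_grzSeq {c : Bool} {S : Sequent} (h : GrzSeq c S) : Provable S := by
  induction h with
  | ax _ Γ Δ A => exact provable_id A Γ Δ
  | bot _ Γ Δ => exact .of_inst₀ (Inst.axBot Γ Δ)
  | impL _ Γ Δ A B _ _ ih₁ ih₂ => exact .of_inst₂ (Inst.impL Γ Δ A B) ih₁ ih₂
  | impR _ Γ Δ A B _ ih => exact .of_inst₁ (Inst.impR Γ Δ A B) ih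
  | refl _ Γ Δ B _ ih => exact .of_inst₁ (Inst.refl Γ Δ B) ih
  | grz _ Γ Δ A P _ ih => exact ih.grz Γ Δ
  | cut Γ Δ A _ _ ih₁ ih₂ => exact .of_inst₂ (Inst.cut Γ Δ A) ih₁ ih₂

/-- provability in Grz_Seq + cut implies provability in Grz∞ + cut. -/
theorem seq_to_inf (S : Sequent) : GrzSeq true S → ∃ π : InfProof, Proves π S :=
  provable_of_grzSeq
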